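/- Deterministic rates with smooth inner operator (monotone case): There is an absolute constant C > 0 such that the following holds. Let X ⊆ ℝ^n be nonempty compact convex with diameter D_X > 0, let F : ℝ^n → ℝ^n be monotone and L_F-Lipschitz on X (i.e., ‖F(x₁) − F(x₂)‖ ≤ L_F‖x₁ − x₂‖ on X), and let H : ℝ^n → ℝ^n be monotone on X with ‖H(x₁) − H(x₂)‖ ≤ L_H‖x₁ − x₂‖ + M_H and ‖H(x)‖ ≤ C_H on X; suppose the solution set X_F^* of VI(F, X) is nonempty. Fix an integer K ≥ 2, set η := K^{−1/2} and γ := D_X/(8D_X(L_F + ηL_H) + M_H) (assume the denominator is positive), and run deterministic R-OpEx with τ_k = θ_k = 1, η_k = η, γ_k = γ, producing x̄_K := (1/(K−1))·Σ_{k=1}^{K−1} x_{k+1}. Then Gap(x̄_K, H, X_F^*) ≤ C·D_X·(D_X L_F/K^{1/2} + D_X L_H/K + M_H/K^{1/2}) and Gap(x̄_K, F, X) ≤ C·D_X·(D_X L_F/K + D_X L_H/K^{3/2} + M_H/K + C_H/K^{1/2}). -/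

import Mathlib

open RealInnerProductSpace

/-- The gap function `Gap(x̃, G, S) = sup_{y ∈ S} ⟪G y, x̃ − y⟫`, valued in the
extended reals. -/
noncomputable def Gap {n : ℕ} (G : EuclideanSpace ℝ (Fin n) → EuclideanSpace ℝ (Fin n))
    (S : Set (EuclideanSpace ℝ (Fin n))) (xt : EuclideanSpace ℝ (Fin n)) : EReal :=
  ⨆ y ∈ S, ((⟪G y, xt - y⟫ : ℝ) : EReal)

/-- The solution set `X_F^*` of the variational inequality `VI(F, X)`. -/
def VISol {n : ℕ} (F : EuclideanSpace ℝ (Fin n) → EuclideanSpace ℝ (Fin n))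
    (X : Set (EuclideanSpace ℝ (Fin n))) : Set (EuclideanSpace ℝ (Fin n)) :=
  {x | x ∈ X ∧ ∀ y ∈ X, 0 ≤ ⟪F x, y - x⟫}

/-!
R-OpEx is operator extrapolation for the regularized operator `G = F + η H`, which on `X` is
`(L_F + η L_H)`-Lipschitz up to the additive error `η M_H`. The three-point inequality of the
prox step, with Young's inequality absorbing the extrapolation error, bounds
`⟪G x_{k+1}, x_{k+1} - z⟫` by the increment of a potential plus `η² M_H D_X / 2`; telescoping
then bounds the regret `∑ₖ ⟪G x_{k+1}, x_{k+1} - z⟫` by `O(L D_X² + M_H D_X)` since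
`(K - 1) η² ≤ 1`. For `z ∈ X_F^*`, monotonicity of `F` and `H` turns the regret bound into
`η ∑ₖ ⟪H z, x_{k+1} - z⟫ = O(...)`, and dividing by `η (K - 1)` gives the bound on
`Gap(x̄_K, H, X_F^*)`. For arbitrary `z ∈ X`, monotonicity of `F` and `‖H‖ ≤ C_H` cost only
`2 η C_H D_X` per step, which gives the bound on `Gap(x̄_K, F, X)`.
-/

section
variable {E : Type*} [NormedAddCommGroup E] [InnerProductSpace ℝ E]

theorem inner_sub_le_of_forall_prox_le {X : Set E} (hX : Convex ℝ X) {c : ℝ} (hc : 0 ≤ c)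
    {g u a : E} (ha : a ∈ X)
    (hmin : ∀ z ∈ X, ⟪g, a⟫ + c * ‖a - u‖ ^ 2 ≤ ⟪g, z⟫ + c * ‖z - u‖ ^ 2) {z : E} (hz : z ∈ X) :
    ⟪g, a - z⟫ ≤ c * (‖z - u‖ ^ 2 - ‖z - a‖ ^ 2 - ‖a - u‖ ^ 2) := by
  rcases hc.eq_or_lt with rfl | hc
  · have := hmin z hz
    simp only [zero_mul, add_zero] at this ⊢
    rw [inner_sub_right]
    linarith
  -- `a` is the projection onto `X` of `w = u - (2c)⁻¹ g`.
  set w := u - (2 * c)⁻¹ • g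
  have hsq (y : E) : ‖w - y‖ ^ 2 = c⁻¹ * (⟪g, y⟫ + c * ‖y - u‖ ^ 2) + (‖w‖ ^ 2 - ‖u‖ ^ 2) := by
    simp only [w, ← real_inner_self_eq_norm_sq, inner_sub_left, inner_sub_right,
      real_inner_smul_left, real_inner_smul_right, real_inner_comm g, real_inner_comm u y]
    field_simp
    ring
  have hle (y : E) (hy : y ∈ X) : ‖w - a‖ ≤ ‖w - y‖ := by
    refine pow_le_pow_iff_left₀ (norm_nonneg _) (norm_nonneg _) two_ne_zero |>.1 ?_
    rw [hsq, hsq]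
    have := hmin y hy
    gcongr c⁻¹ * ?_ + _
  have hproj : ‖w - a‖ = ⨅ y : X, ‖w - y‖ := by
    have : Nonempty X := ⟨⟨a, ha⟩⟩
    refine le_antisymm (le_ciInf fun y => hle y y.2) (ciInf_le ?_ (⟨a, ha⟩ : X))
    exact bddBelow_def.2 ⟨0, Set.forall_mem_range.2 fun _ => norm_nonneg _⟩
  have h := (norm_eq_iInf_iff_real_inner_le_zero hX ha).1 hproj z hz
  simp only [w, ← real_inner_self_eq_norm_sq, inner_sub_left, inner_sub_right,
      real_inner_smul_right, real_inner_comm] at h ⊢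
  field_simp at h
  linear_combination h

theorem inner_sub_le_of_opex_step {L M D η c : ℝ} (hL : 0 ≤ L) (hM : 0 ≤ M) (hD : 0 < D)
    (hc : 2 * L + M / (2 * D) ≤ c) {a b b' z Ga Gb Gb' : E}
    (hprox : ⟪Gb + (Gb - Gb'), a - z⟫ ≤ c * (‖z - b‖ ^ 2 - ‖z - a‖ ^ 2 - ‖a - b‖ ^ 2))
    (hlip : ‖Gb - Gb'‖ ≤ L * ‖b - b'‖ + η * M) :
    ⟪Ga, a - z⟫ ≤ (⟪Ga - Gb, a - z⟫ - c * ‖z - a‖ ^ 2 - L * ‖a - b‖ ^ 2)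
      - (⟪Gb - Gb', b - z⟫ - c * ‖z - b‖ ^ 2 - L * ‖b - b'‖ ^ 2) + η ^ 2 * M * D / 2 := by
  have hsplit : ⟪Ga, a - z⟫ = ⟪Gb + (Gb - Gb'), a - z⟫ + ⟪Ga - Gb, a - z⟫
      - ⟪Gb - Gb', b - z⟫ - ⟪Gb - Gb', a - b⟫ := by
    simp only [inner_add_left, inner_sub_left, inner_sub_right]
    ring
  have hcs : -⟪Gb - Gb', a - b⟫ ≤ (L * ‖b - b'‖ + η * M) * ‖a - b‖ :=
    (neg_le_abs _).trans <| (abs_real_inner_le_norm _ _).trans <|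
      mul_le_mul_of_nonneg_right hlip (norm_nonneg _)
  -- Young's inequality, twice: `L p q ≤ L p² + L q² / 4` and `η M q ≤ M q² / (2D) + η² M D / 2`.
  have hyoung₁ : L * ‖b - b'‖ * ‖a - b‖ ≤ L * ‖b - b'‖ ^ 2 + L * ‖a - b‖ ^ 2 / 4 := by
    nlinarith [mul_nonneg hL (sq_nonneg (‖b - b'‖ - ‖a - b‖ / 2))]
  have hyoung₂ : η * M * ‖a - b‖ ≤ M / (2 * D) * ‖a - b‖ ^ 2 + η ^ 2 * M * D / 2 := by
    have h : 0 ≤ M * (‖a - b‖ - η * D) ^ 2 / (2 * D) := by positivity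
    have : M * (‖a - b‖ - η * D) ^ 2 / (2 * D)
        = M / (2 * D) * ‖a - b‖ ^ 2 - η * M * ‖a - b‖ + η ^ 2 * M * D / 2 := by
      field_simp
      ring
    linarith
  have hc' : (2 * L + M / (2 * D)) * ‖a - b‖ ^ 2 ≤ c * ‖a - b‖ ^ 2 :=
    mul_le_mul_of_nonneg_right hc (sq_nonneg _)
  rw [hsplit]
  linarith [mul_nonneg hL (sq_nonneg ‖a - b‖)]

def opexPotential (G : E → E) (L c : ℝ) (z : E) (x : ℕ → E) (k : ℕ) : ℝ :=
  ⟪G (x k) - G (x (k - 1)), x k - z⟫ - c * ‖z - x k‖ ^ 2 - L * ‖x k - x (k - 1)‖ ^ 2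

variable {X : Set E} {G : E → E} {L M D η c : ℝ} {x : ℕ → E} {z : E} {N : ℕ}

theorem opexPotential_le (hdiam : ∀ a ∈ X, ∀ b ∈ X, ‖a - b‖ ≤ 2 * D) (hL : 0 ≤ L) (hc : 0 ≤ c)
    (hG : ∀ a ∈ X, ∀ b ∈ X, ‖G a - G b‖ ≤ L * ‖a - b‖ + η * M) {k : ℕ} (hk : x k ∈ X)
    (hk' : x (k - 1) ∈ X) (hz : z ∈ X) :
    opexPotential G L c z x k ≤ (L * (2 * D) + η * M) * (2 * D) := by
  have hGk : ‖G (x k) - G (x (k - 1))‖ ≤ L * (2 * D) + η * M := by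
    linarith [hG _ hk _ hk', mul_le_mul_of_nonneg_left (hdiam _ hk _ hk') hL]
  have hcs : ⟪G (x k) - G (x (k - 1)), x k - z⟫ ≤ (L * (2 * D) + η * M) * (2 * D) :=
    (real_inner_le_norm _ _).trans <|
      mul_le_mul hGk (hdiam _ hk _ hz) (norm_nonneg _) ((norm_nonneg _).trans hGk)
  unfold opexPotential
  nlinarith [mul_nonneg hc (sq_nonneg ‖z - x k‖), mul_nonneg hL (sq_nonneg ‖x k - x (k - 1)‖)]

theorem neg_opexPotential_one_le (hdiam : ∀ a ∈ X, ∀ b ∈ X, ‖a - b‖ ≤ 2 * D) (hc : 0 ≤ c)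
    (hx01 : x 0 = x 1) (hx1 : x 1 ∈ X) (hz : z ∈ X) :
    -opexPotential G L c z x 1 ≤ c * (2 * D) ^ 2 := by
  have hzx := hdiam _ hz _ hx1
  simp only [opexPotential, Nat.sub_self, hx01, sub_self, inner_zero_left, norm_zero]
  nlinarith [mul_le_mul_of_nonneg_left (pow_le_pow_left₀ (norm_nonneg _) hzx 2) hc]

theorem inner_le_opexPotential_sub (hX : Convex ℝ X) (hD : 0 < D) (hL : 0 ≤ L) (hM : 0 ≤ M)
    (hc : c = 4 * L + M / (2 * D))
    (hG : ∀ a ∈ X, ∀ b ∈ X, ‖G a - G b‖ ≤ L * ‖a - b‖ + η * M) {k : ℕ}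
    (hk : x k ∈ X) (hk' : x (k - 1) ∈ X) (hk1 : x (k + 1) ∈ X)
    (hmin : ∀ z ∈ X, ⟪G (x k) + (G (x k) - G (x (k - 1))), x (k + 1)⟫ + c * ‖x (k + 1) - x k‖ ^ 2
      ≤ ⟪G (x k) + (G (x k) - G (x (k - 1))), z⟫ + c * ‖z - x k‖ ^ 2) (hz : z ∈ X) :
    ⟪G (x (k + 1)), x (k + 1) - z⟫
      ≤ opexPotential G L c z x (k + 1) - opexPotential G L c z x k + η ^ 2 * M * D / 2 := by
  have hc0 : 0 ≤ c := by rw [hc]; positivity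
  exact inner_sub_le_of_opex_step hL hM hD (by rw [hc]; linarith)
    (inner_sub_le_of_forall_prox_le hX hc0 hk1 hmin hz) (hG _ hk _ hk')

theorem sum_inner_le_of_opex (hX : Convex ℝ X) (hdiam : ∀ a ∈ X, ∀ b ∈ X, ‖a - b‖ ≤ 2 * D)
    (hD : 0 < D) (hL : 0 ≤ L) (hM : 0 ≤ M) (hη : η ≤ 1) (hNη : N * η ^ 2 ≤ 1)
    (hc : c = 4 * L + M / (2 * D))
    (hG : ∀ a ∈ X, ∀ b ∈ X, ‖G a - G b‖ ≤ L * ‖a - b‖ + η * M)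
    (hx01 : x 0 = x 1) (hx1 : x 1 ∈ X) (hx : ∀ k, 1 ≤ k → k ≤ N → x (k + 1) ∈ X)
    (hmin : ∀ k, 1 ≤ k → k ≤ N → ∀ z ∈ X,
      ⟪G (x k) + (G (x k) - G (x (k - 1))), x (k + 1)⟫ + c * ‖x (k + 1) - x k‖ ^ 2
        ≤ ⟪G (x k) + (G (x k) - G (x (k - 1))), z⟫ + c * ‖z - x k‖ ^ 2) (hz : z ∈ X) :
    ∑ k ∈ Finset.Icc 1 N, ⟪G (x (k + 1)), x (k + 1) - z⟫ ≤ 20 * L * D ^ 2 + 5 * M * D := by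
  have hmem : ∀ k ≤ N + 1, x k ∈ X
    | 0, _ => hx01 ▸ hx1
    | 1, _ => hx1
    | k + 2, hk => hx (k + 1) (by omega) (by omega)
  have hc0 : 0 ≤ c := by rw [hc]; positivity
  calc ∑ k ∈ Finset.Icc 1 N, ⟪G (x (k + 1)), x (k + 1) - z⟫
      ≤ ∑ k ∈ Finset.Icc 1 N, (opexPotential G L c z x (k + 1) - opexPotential G L c z x k
          + η ^ 2 * M * D / 2) := by
        refine Finset.sum_le_sum fun k hk => ?_
        obtain ⟨hk1, hkN⟩ := Finset.mem_Icc.1 hk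
        exact inner_le_opexPotential_sub hX hD hL hM hc hG (hmem k (by omega))
          (hmem (k - 1) (by omega)) (hx k hk1 hkN) (hmin k hk1 hkN) hz
    _ = opexPotential G L c z x (N + 1) - opexPotential G L c z x 1
          + N * (η ^ 2 * M * D / 2) := by
        rw [Finset.sum_add_distrib, Finset.sum_const, Nat.card_Icc, Nat.add_sub_cancel,
          nsmul_eq_mul]
        rcases N.eq_zero_or_pos with rfl | hN
        · simp
        · rw [Finset.sum_Icc_sub hN]
    _ ≤ 20 * L * D ^ 2 + 5 * M * D := by
        have hΦ := opexPotential_le hdiam hL hc0 hG (hmem (N + 1) le_rfl) (hmem N (by omega)) hz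
        have hΦ₁ := neg_opexPotential_one_le (G := G) (L := L) hdiam hc0 hx01 hx1 hz
        have hrem := mul_le_mul_of_nonneg_right hNη (by positivity : 0 ≤ M * D / 2)
        have hηM : η * M * (2 * D) ≤ M * (2 * D) :=
          mul_le_mul_of_nonneg_right (mul_le_of_le_one_left hM hη) (by positivity)
        have hcD : c * (2 * D) ^ 2 = 16 * L * D ^ 2 + 2 * M * D := by
          rw [hc]; field_simp; ring
        linarith [mul_nonneg hM hD.le]

theorem norm_add_smul_sub_add_smul_le {F H : E → E} {LF LH MH : ℝ} (hη : 0 ≤ η) {a b : E}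
    (hF : ‖F a - F b‖ ≤ LF * ‖a - b‖) (hH : ‖H a - H b‖ ≤ LH * ‖a - b‖ + MH) :
    ‖(F a + η • H a) - (F b + η • H b)‖ ≤ (LF + η * LH) * ‖a - b‖ + η * MH :=
  calc ‖(F a + η • H a) - (F b + η • H b)‖ = ‖(F a - F b) + η • (H a - H b)‖ := by
        congr 1; module
    _ ≤ ‖F a - F b‖ + η * ‖H a - H b‖ :=
        (norm_add_le _ _).trans_eq (by rw [norm_smul, Real.norm_of_nonneg hη])
    _ ≤ (LF + η * LH) * ‖a - b‖ + η * MH := by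
        linarith [mul_le_mul_of_nonneg_left hH hη]

theorem sum_inner_le_of_ropex {F H : E → E} {LF LH MH γ : ℝ} (hX : Convex ℝ X)
    (hdiam : ∀ a ∈ X, ∀ b ∈ X, ‖a - b‖ ≤ 2 * D) (hD : 0 < D) (hLF : 0 ≤ LF) (hLH : 0 ≤ LH)
    (hMH : 0 ≤ MH) (hη0 : 0 ≤ η) (hη : η ≤ 1) (hNη : N * η ^ 2 ≤ 1)
    (hγ : γ = D / (8 * D * (LF + η * LH) + MH))
    (hF : ∀ a ∈ X, ∀ b ∈ X, ‖F a - F b‖ ≤ LF * ‖a - b‖)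
    (hH : ∀ a ∈ X, ∀ b ∈ X, ‖H a - H b‖ ≤ LH * ‖a - b‖ + MH)
    (hx01 : x 0 = x 1) (hx1 : x 1 ∈ X) (hx : ∀ k, 1 ≤ k → k ≤ N → x (k + 1) ∈ X)
    (hmin : ∀ k, 1 ≤ k → k ≤ N → ∀ z ∈ X,
      ⟪F (x k) + η • H (x k)
          + (F (x k) + η • H (x k) - F (x (k - 1)) - η • H (x (k - 1))), x (k + 1)⟫
          + 1 / (2 * γ) * ‖x (k + 1) - x k‖ ^ 2
        ≤ ⟪F (x k) + η • H (x k)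
          + (F (x k) + η • H (x k) - F (x (k - 1)) - η • H (x (k - 1))), z⟫
          + 1 / (2 * γ) * ‖z - x k‖ ^ 2) (hz : z ∈ X) :
    ∑ k ∈ Finset.Icc 1 N, ⟪F (x (k + 1)) + η • H (x (k + 1)), x (k + 1) - z⟫
      ≤ 20 * (LF + η * LH) * D ^ 2 + 5 * MH * D := by
  have hc : 1 / (2 * γ) = 4 * (LF + η * LH) + MH / (2 * D) := by
    rw [hγ]; field_simp; ring
  exact sum_inner_le_of_opex (G := fun v => F v + η • H v) hX hdiam hD (by positivity) hMH hη hNη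
    hc (fun a ha b hb => norm_add_smul_sub_add_smul_le hη0 (hF a ha b hb) (hH a ha b hb)) hx01
    hx1 hx (fun k h1 h2 z hz => by simpa only [sub_sub] using hmin k h1 h2 z hz) hz

theorem smul_inner_sub_le_inner_add_smul {F H : E → E} (hη : 0 ≤ η) {a y : E}
    (hya : 0 ≤ ⟪F y, a - y⟫) (hF : 0 ≤ ⟪F a - F y, a - y⟫) (hH : 0 ≤ ⟪H a - H y, a - y⟫) :
    η * ⟪H y, a - y⟫ ≤ ⟪F a + η • H a, a - y⟫ := by
  rw [inner_sub_left] at hF hH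
  rw [inner_add_left, real_inner_smul_left]
  nlinarith

theorem inner_sub_le_inner_add_smul_add {F H : E → E} {CH : ℝ} (hη : 0 ≤ η) {a y : E}
    (hF : 0 ≤ ⟪F a - F y, a - y⟫) (hHa : ‖H a‖ ≤ CH) (hay : ‖a - y‖ ≤ 2 * D) :
    ⟪F y, a - y⟫ ≤ ⟪F a + η • H a, a - y⟫ + η * (CH * (2 * D)) := by
  have hbound : -⟪H a, a - y⟫ ≤ CH * (2 * D) :=
    (neg_le_abs _).trans <| (abs_real_inner_le_norm _ _).trans <|
      mul_le_mul hHa hay (norm_nonneg _) ((norm_nonneg _).trans hHa)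
  rw [inner_sub_left] at hF
  rw [inner_add_left, real_inner_smul_left]
  nlinarith [mul_le_mul_of_nonneg_left hbound hη]

end

section
variable {n : ℕ} {G : EuclideanSpace ℝ (Fin n) → EuclideanSpace ℝ (Fin n)}
  {S : Set (EuclideanSpace ℝ (Fin n))}

theorem gap_le_coe_iff {xt : EuclideanSpace ℝ (Fin n)} {b : ℝ} :
    Gap G S xt ≤ b ↔ ∀ y ∈ S, ⟪G y, xt - y⟫ ≤ b := by
  simp only [Gap, iSup₂_le_iff, EReal.coe_le_coe_iff]

theorem gap_average_le {ι : Type*} {s : Finset ι} (hs : s.Nonempty)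
    {x : ι → EuclideanSpace ℝ (Fin n)} {B : ℝ} (h : ∀ y ∈ S, ∑ i ∈ s, ⟪G y, x i - y⟫ ≤ B) :
    Gap G S ((s.card : ℝ)⁻¹ • ∑ i ∈ s, x i) ≤ (((s.card : ℝ)⁻¹ * B : ℝ) : EReal) := by
  refine gap_le_coe_iff.2 fun y hy => ?_
  have hcard : (s.card : ℝ) ≠ 0 := by exact_mod_cast hs.card_pos.ne'
  have havg : (s.card : ℝ)⁻¹ • ∑ i ∈ s, x i - y = (s.card : ℝ)⁻¹ • ∑ i ∈ s, (x i - y) := by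
    rw [Finset.sum_sub_distrib, Finset.sum_const, smul_sub, ← Nat.cast_smul_eq_nsmul ℝ,
      smul_smul, inv_mul_cancel₀ hcard, one_smul]
  rw [havg, real_inner_smul_right, inner_sum]
  exact mul_le_mul_of_nonneg_left (h y hy) (by positivity)

theorem gap_VISol_average_le {F H : EuclideanSpace ℝ (Fin n) → EuclideanSpace ℝ (Fin n)}
    {X : Set (EuclideanSpace ℝ (Fin n))} {η B : ℝ} (hη : 0 < η)
    (hF : ∀ a ∈ X, ∀ b ∈ X, 0 ≤ ⟪F a - F b, a - b⟫)
    (hH : ∀ a ∈ X, ∀ b ∈ X, 0 ≤ ⟪H a - H b, a - b⟫)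
    {ι : Type*} {s : Finset ι} (hs : s.Nonempty) {x : ι → EuclideanSpace ℝ (Fin n)}
    (hx : ∀ i ∈ s, x i ∈ X) (hB : ∀ z ∈ X, ∑ i ∈ s, ⟪F (x i) + η • H (x i), x i - z⟫ ≤ B) :
    Gap H (VISol F X) ((s.card : ℝ)⁻¹ • ∑ i ∈ s, x i)
      ≤ (((s.card : ℝ)⁻¹ * (B / η) : ℝ) : EReal) := by
  refine gap_average_le hs fun y ⟨hyX, hyVI⟩ => ?_
  rw [le_div_iff₀ hη, mul_comm, Finset.mul_sum]
  refine (Finset.sum_le_sum fun i hi => ?_).trans (hB y hyX)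
  exact smul_inner_sub_le_inner_add_smul hη.le (hyVI _ (hx i hi)) (hF _ (hx i hi) _ hyX)
    (hH _ (hx i hi) _ hyX)

theorem gap_average_le_add {F H : EuclideanSpace ℝ (Fin n) → EuclideanSpace ℝ (Fin n)}
    {X : Set (EuclideanSpace ℝ (Fin n))} {η CH D B : ℝ} (hη : 0 ≤ η)
    (hF : ∀ a ∈ X, ∀ b ∈ X, 0 ≤ ⟪F a - F b, a - b⟫) (hH : ∀ a ∈ X, ‖H a‖ ≤ CH)
    (hdiam : ∀ a ∈ X, ∀ b ∈ X, ‖a - b‖ ≤ 2 * D)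
    {ι : Type*} {s : Finset ι} (hs : s.Nonempty) {x : ι → EuclideanSpace ℝ (Fin n)}
    (hx : ∀ i ∈ s, x i ∈ X) (hB : ∀ z ∈ X, ∑ i ∈ s, ⟪F (x i) + η • H (x i), x i - z⟫ ≤ B) :
    Gap F X ((s.card : ℝ)⁻¹ • ∑ i ∈ s, x i)
      ≤ (((s.card : ℝ)⁻¹ * B + η * (CH * (2 * D)) : ℝ) : EReal) := by
  have hsum (y : EuclideanSpace ℝ (Fin n)) (hy : y ∈ X) :
      ∑ i ∈ s, ⟪F y, x i - y⟫ ≤ B + s.card * (η * (CH * (2 * D))) :=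
    calc ∑ i ∈ s, ⟪F y, x i - y⟫
        ≤ ∑ i ∈ s, (⟪F (x i) + η • H (x i), x i - y⟫ + η * (CH * (2 * D))) :=
          Finset.sum_le_sum fun i hi => inner_sub_le_inner_add_smul_add hη
            (hF _ (hx i hi) _ hy) (hH _ (hx i hi)) (hdiam _ (hx i hi) _ hy)
      _ ≤ B + s.card * (η * (CH * (2 * D))) := by
          rw [Finset.sum_add_distrib, Finset.sum_const, nsmul_eq_mul]
          linarith [hB y hy]
  refine (gap_average_le hs hsum).trans_eq ?_
  rw [mul_add, inv_mul_cancel_left₀ (by exact_mod_cast hs.card_pos.ne')]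

end

theorem sub_one_mul_rpow_neg_half_sq_le_one {K : ℝ} (hK : 0 < K) :
    (K - 1) * (K ^ (-(1 / 2 : ℝ))) ^ 2 ≤ 1 := by
  rw [← Real.rpow_natCast, ← Real.rpow_mul hK.le]
  norm_num
  rw [Real.rpow_neg_one, sub_mul, mul_inv_cancel₀ hK.ne']
  linarith [inv_pos.2 hK]

theorem rpow_three_halves_eq_mul_sqrt (K : ℝ) (hK : 0 < K) : K ^ ((3 : ℝ) / 2) = K * √K := by
  rw [show (3 : ℝ) / 2 = 1 + 1 / 2 by norm_num, Real.rpow_add hK, Real.rpow_one,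
    Real.sqrt_eq_rpow]

theorem rate_gap_inner_le {K η LF LH M D : ℝ} (hK : 2 ≤ K) (hη : η = K ^ (-(1 / 2 : ℝ)))
    (hLF : 0 ≤ LF) (hLH : 0 ≤ LH) (hM : 0 ≤ M) (hD : 0 ≤ D) :
    (K - 1)⁻¹ * ((20 * (LF + η * LH) * D ^ 2 + 5 * M * D) / η)
      ≤ 100 * D * (D * LF / K ^ ((1 : ℝ) / 2) + D * LH / K + M / K ^ ((1 : ℝ) / 2)) := by
  rw [hη, Real.rpow_neg (by linarith), ← Real.sqrt_eq_rpow]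
  have hK' : K = √K ^ 2 := (Real.sq_sqrt (by linarith)).symm
  have hs := Real.sqrt_nonneg K
  generalize √K = s at hK' hs
  subst hK'
  have hs : 0 < s := by nlinarith
  have hinv : (s ^ 2 - 1)⁻¹ ≤ 2 / s ^ 2 := by
    rw [inv_le_iff_one_le_mul₀ (by linarith)]; field_simp; linarith
  have : 0 ≤ D ^ 2 * LF / s := by positivity
  have : 0 ≤ D ^ 2 * LH / s ^ 2 := by positivity
  have : 0 ≤ D * M / s := by positivity
  calc (s ^ 2 - 1)⁻¹ * ((20 * (LF + s⁻¹ * LH) * D ^ 2 + 5 * M * D) / s⁻¹)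
      ≤ 2 / s ^ 2 * ((20 * (LF + s⁻¹ * LH) * D ^ 2 + 5 * M * D) / s⁻¹) := by gcongr
    _ = 40 * (D ^ 2 * LF / s) + 40 * (D ^ 2 * LH / s ^ 2) + 10 * (D * M / s) := by
      field_simp; ring
    _ ≤ 100 * (D ^ 2 * LF / s) + 100 * (D ^ 2 * LH / s ^ 2) + 100 * (D * M / s) := by linarith
    _ = 100 * D * (D * LF / s + D * LH / s ^ 2 + M / s) := by ring

theorem rate_gap_outer_le {K η LF LH M CH D : ℝ} (hK : 2 ≤ K) (hη : η = K ^ (-(1 / 2 : ℝ)))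
    (hLF : 0 ≤ LF) (hLH : 0 ≤ LH) (hM : 0 ≤ M) (hCH : 0 ≤ CH) (hD : 0 ≤ D) :
    (K - 1)⁻¹ * (20 * (LF + η * LH) * D ^ 2 + 5 * M * D) + η * (CH * (2 * D))
      ≤ 100 * D * (D * LF / K + D * LH / K ^ ((3 : ℝ) / 2) + M / K
        + CH / K ^ ((1 : ℝ) / 2)) := by
  rw [hη, Real.rpow_neg (by linarith), rpow_three_halves_eq_mul_sqrt K (by linarith), ← Real.sqrt_eq_rpow]
  have hK' : K = √K ^ 2 := (Real.sq_sqrt (by linarith)).symm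
  have hs := Real.sqrt_nonneg K
  generalize √K = s at hK' hs
  subst hK'
  have hs : 0 < s := by nlinarith
  have hinv : (s ^ 2 - 1)⁻¹ ≤ 2 / s ^ 2 := by
    rw [inv_le_iff_one_le_mul₀ (by linarith)]; field_simp; linarith
  have : 0 ≤ D ^ 2 * LF / s ^ 2 := by positivity
  have : 0 ≤ D ^ 2 * LH / (s ^ 2 * s) := by positivity
  have : 0 ≤ D * M / s ^ 2 := by positivity
  have : 0 ≤ D * CH / s := by positivity
  calc (s ^ 2 - 1)⁻¹ * (20 * (LF + s⁻¹ * LH) * D ^ 2 + 5 * M * D) + s⁻¹ * (CH * (2 * D))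
      ≤ 2 / s ^ 2 * (20 * (LF + s⁻¹ * LH) * D ^ 2 + 5 * M * D) + s⁻¹ * (CH * (2 * D)) := by
        gcongr
    _ = 40 * (D ^ 2 * LF / s ^ 2) + 40 * (D ^ 2 * LH / (s ^ 2 * s)) + 10 * (D * M / s ^ 2)
        + 2 * (D * CH / s) := by
      field_simp; ring
    _ ≤ 100 * (D ^ 2 * LF / s ^ 2) + 100 * (D ^ 2 * LH / (s ^ 2 * s)) + 100 * (D * M / s ^ 2)
        + 100 * (D * CH / s) := by linarith
    _ = 100 * D * (D * LF / s ^ 2 + D * LH / (s ^ 2 * s) + M / s ^ 2 + CH / s) := by ring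

/-- **Deterministic rates with smooth inner operator (monotone case).**
With `F` `L_F`-Lipschitz on `X`, `τ_k = θ_k = 1`, `η = K^{-1/2}`, and
`γ = D_X/(8 D_X (L_F + η L_H) + M_H)`, the averaged iterate `x̄_K` satisfies
`Gap(x̄_K, H, X_F^*) ≤ C D_X (D_X L_F/K^{1/2} + D_X L_H/K + M_H/K^{1/2})` and
`Gap(x̄_K, F, X) ≤ C D_X (D_X L_F/K + D_X L_H/K^{3/2} + M_H/K + C_H/K^{1/2})`. -/
theorem ropex_rates_smooth_inner_monotone :
    ∃ C : ℝ, 0 < C ∧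
      ∀ (n : ℕ) (X : Set (EuclideanSpace ℝ (Fin n)))
        (F H : EuclideanSpace ℝ (Fin n) → EuclideanSpace ℝ (Fin n))
        (LF LH MH CH DX : ℝ) (K : ℕ) (η γ : ℝ)
        (x : ℕ → EuclideanSpace ℝ (Fin n)),
        X.Nonempty → IsCompact X → Convex ℝ X →
        DX = Metric.diam X / 2 → 0 < DX →
        0 ≤ LF → 0 ≤ LH → 0 ≤ MH →
        (∀ a ∈ X, ∀ b ∈ X, 0 ≤ ⟪F a - F b, a - b⟫) →
        (∀ a ∈ X, ∀ b ∈ X, ‖F a - F b‖ ≤ LF * ‖a - b‖) →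
        (∀ a ∈ X, ∀ b ∈ X, 0 ≤ ⟪H a - H b, a - b⟫) →
        (∀ a ∈ X, ∀ b ∈ X, ‖H a - H b‖ ≤ LH * ‖a - b‖ + MH) →
        (∀ a ∈ X, ‖H a‖ ≤ CH) →
        (VISol F X).Nonempty →
        2 ≤ K →
        η = (K : ℝ) ^ (-(1 / 2 : ℝ)) →
        0 < 8 * DX * (LF + η * LH) + MH →
        γ = DX / (8 * DX * (LF + η * LH) + MH) →
        x 0 = x 1 → x 1 ∈ X →
        (∀ k, 1 ≤ k → k ≤ K - 1 → x (k + 1) ∈ X) →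
        (∀ k, 1 ≤ k → k ≤ K - 1 → ∀ z ∈ X,
          ⟪F (x k) + η • H (x k)
              + (F (x k) + η • H (x k) - F (x (k - 1)) - η • H (x (k - 1))), x (k + 1)⟫
              + 1 / (2 * γ) * ‖x (k + 1) - x k‖ ^ 2
            ≤ ⟪F (x k) + η • H (x k)
              + (F (x k) + η • H (x k) - F (x (k - 1)) - η • H (x (k - 1))), z⟫
              + 1 / (2 * γ) * ‖z - x k‖ ^ 2) →
        (Gap H (VISol F X) (((K : ℝ) - 1)⁻¹ • ∑ k ∈ Finset.Icc 1 (K - 1), x (k + 1))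
            ≤ ((C * DX * (DX * LF / (K : ℝ) ^ ((1 : ℝ) / 2) + DX * LH / (K : ℝ)
              + MH / (K : ℝ) ^ ((1 : ℝ) / 2)) : ℝ) : EReal)) ∧
        (Gap F X (((K : ℝ) - 1)⁻¹ • ∑ k ∈ Finset.Icc 1 (K - 1), x (k + 1))
            ≤ ((C * DX * (DX * LF / (K : ℝ) + DX * LH / (K : ℝ) ^ ((3 : ℝ) / 2)
              + MH / (K : ℝ) + CH / (K : ℝ) ^ ((1 : ℝ) / 2)) : ℝ) : EReal)) := by
  refine ⟨100, by norm_num, ?_⟩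
  intro n X F H LF LH MH CH DX K η γ x _ hXc hXconv hDX hDX0 hLF hLH hMH hFmono hFlip hHmono
    hHlip hHbd _ hK hη _ hγ hx01 hx1 hx hmin
  have hK2 : (2 : ℝ) ≤ K := by exact_mod_cast hK
  have hη0 : 0 < η := hη ▸ Real.rpow_pos_of_pos (by linarith) _
  have hη1 : η ≤ 1 := hη ▸ Real.rpow_le_one_of_one_le_of_nonpos (by linarith) (by norm_num)
  have hNη : ((K - 1 : ℕ) : ℝ) * η ^ 2 ≤ 1 := by
    rw [Nat.cast_sub (by omega), Nat.cast_one, hη]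
    exact sub_one_mul_rpow_neg_half_sq_le_one (by linarith)
  have hdiam : ∀ a ∈ X, ∀ b ∈ X, ‖a - b‖ ≤ 2 * DX := fun a ha b hb => by
    rw [← dist_eq_norm, hDX]; linarith [Metric.dist_le_diam_of_mem hXc.isBounded ha hb]
  have hregret := fun z (hz : z ∈ X) => sum_inner_le_of_ropex hXconv hdiam hDX0 hLF hLH hMH
    hη0.le hη1 hNη hγ hFlip hHlip hx01 hx1 hx hmin hz
  have hcard : ((Finset.Icc 1 (K - 1)).card : ℝ) = K - 1 := by
    rw [Nat.card_Icc, Nat.add_sub_cancel, Nat.cast_sub (by omega), Nat.cast_one]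
  have hne : (Finset.Icc 1 (K - 1)).Nonempty := ⟨1, Finset.mem_Icc.2 ⟨le_rfl, by omega⟩⟩
  have hxX : ∀ k ∈ Finset.Icc 1 (K - 1), x (k + 1) ∈ X := fun k hk =>
    hx k (Finset.mem_Icc.1 hk).1 (Finset.mem_Icc.1 hk).2
  have hCH : 0 ≤ CH := (norm_nonneg _).trans (hHbd _ hx1)
  rw [← hcard]
  refine ⟨(gap_VISol_average_le hη0 hFmono hHmono hne hxX hregret).trans ?_,
    (gap_average_le_add hη0.le hFmono hHbd hdiam hne hxX hregret).trans ?_⟩ <;>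
  rw [hcard, EReal.coe_le_coe_iff]
  · exact rate_gap_inner_le hK2 hη hLF hLH hMH hDX0.le
  · exact rate_gap_outer_le hK2 hη hLF hLH hMH hCH hDX0.le
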